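/- Let 𝒜 be a locally finite L-structure and ℬ an L'-structure every finitely generated substructure of which is rigid, and suppose 𝒜 is a semi-retract of ℬ via (g, f). If ℬ has the Ramsey property, i.e. for every pair of finitely generated substructures A₀, B₀ of ℬ and every integer r ≥ 2 we have ℬ → (B₀)^{A₀}_r, then 𝒜 has the Ramsey property: for every pair of finite substructures A, B of 𝒜 and every integer r ≥ 2, 𝒜 → (B)^A_r. -/

import Mathlib

open FirstOrder FirstOrder.Language

/-- Two same-length tuples have the same quantifier-free type over ∅. -/
def SameQfType (L : FirstOrder.Language) (M : Type*) [L.Structure M] {n : ℕ}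
    (x y : Fin n → M) : Prop :=
  ∀ φ : L.Formula (Fin n), φ.IsQF → (φ.Realize x ↔ φ.Realize y)

/-- A qftp-respecting injection between structures in possibly different languages. -/
def QftpRespecting (L L' : FirstOrder.Language) (M N : Type*) [L.Structure M] [L'.Structure N]
    (h : M → N) : Prop :=
  Function.Injective h ∧
    ∀ (n : ℕ) (x y : Fin n → M), SameQfType L M x y → SameQfType L' N (h ∘ x) (h ∘ y)

/-- `(g, f)` is a semi-retraction between `M` and `N`: both maps are qftp-respecting
injections and `f ∘ g` is qftp-preserving (equivalently, an `L`-embedding of `M` into `M`). -/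
def IsSemiRetraction (L L' : FirstOrder.Language) (M N : Type*)
    [L.Structure M] [L'.Structure N] (g : M → N) (f : N → M) : Prop :=
  QftpRespecting L L' M N g ∧ QftpRespecting L' L N M f ∧
    ∀ (n : ℕ) (x : Fin n → M), SameQfType L M x (f ∘ g ∘ x)

/-- `M` is locally finite: every finitely generated substructure is finite. -/
def StructLocallyFinite (L : FirstOrder.Language) (M : Type*) [L.Structure M] : Prop :=
  ∀ S : L.Substructure M, S.FG → (S : Set M).Finite

/-- `M → (B)^A_{r,d}` for substructures. -/
def ArrowSub (L : FirstOrder.Language) (M : Type*) [L.Structure M]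
    (A B : L.Substructure M) (r d : ℕ) : Prop :=
  ∀ c : L.Substructure M → Fin r, ∃ B' : L.Substructure M,
    Nonempty (B' ≃[L] B) ∧
      (c '' {A' : L.Substructure M | A' ≤ B' ∧ Nonempty (A' ≃[L] A)}).ncard ≤ d

/-- `M →ᵉ (B)^A_{r,d}` for embeddings. -/
def ArrowEmb (L : FirstOrder.Language) (M : Type*) [L.Structure M]
    (A B : L.Substructure M) (r d : ℕ) : Prop :=
  ∀ c : (A ↪[L] M) → Fin r, ∃ h : B ↪[L] M,
    (c '' {j : A ↪[L] M | ∃ e : A ↪[L] B, j = h.comp e}).ncard ≤ d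

/-- A structure is rigid if its only automorphism is the identity. -/
def IsRigidStructure (L : FirstOrder.Language) (M : Type*) [L.Structure M] : Prop :=
  ∀ σ : M ≃[L] M, ∀ x : M, σ x = x

/-! The tuple enumerating a finite substructure `A` of `M` is pushed to `N` by `g`, generating
`A₀`. A colouring of the copies of `A` in `M` is pulled back to the copies `S` of `A₀` in `N`:
`S` gets the colour of the structure generated by the `f`-image of the generators of `A₀` moved
into `S`; rigidity of `A₀` makes the isomorphism `A₀ ≃ S` unique, so no choice is involved.
Given a monochromatic copy `B₀' ≃ ⟨g '' B⟩` (via `σ`), the map `f ∘ σ⁻¹ ∘ g` preserves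
quantifier-free types on `B`, so it carries `B` onto a copy of `B` in `M`, and every copy of `A`
inside it is generated by the `f`-image of the generators of a copy of `A₀` inside `B₀'`, hence
has that copy's colour. -/

open Set Substructure Structure

section QfType

variable {L : FirstOrder.Language} {M : Type*} [L.Structure M] {n : ℕ}

theorem FirstOrder.Language.BoundedFormula.IsQF.realize_formula_embedding {P : Type*}
    [L.Structure P] {F : Type*} [FunLike F M P] [EmbeddingLike F M P] [L.StrongHomClass F M P]
    {α : Type*} {ψ : L.Formula α} (hψ : ψ.IsQF) (φ : F) (v : α → M) :
    ψ.Realize (φ ∘ v) ↔ ψ.Realize v := by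
  rw [Formula.Realize, Formula.Realize, ← hψ.realize_embedding φ, Unique.eq_default (φ ∘ default)]

theorem mem_closure_range_iff {x : Fin n → M} {z : M} :
    z ∈ closure L (range x) ↔ ∃ t : L.Term (Fin n), t.realize x = z := by
  constructor
  · intro hz
    obtain ⟨t, rfl⟩ := mem_closure_iff_exists_term.1 hz
    refine ⟨t.relabel (rangeSplitting x), ?_⟩
    rw [Term.realize_relabel]
    exact congrArg t.realize (funext (apply_rangeSplitting x))
  · rintro ⟨t, rfl⟩
    exact t.realize_mem x fun i => subset_closure (mem_range_self i)

variable (L) in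
def closureGenerators (x : Fin n → M) : Fin n → closure L (range x) :=
  fun i => ⟨x i, subset_closure (mem_range_self i)⟩

namespace SameQfType

variable {x y z : Fin n → M}

@[symm]
theorem symm (h : SameQfType L M x y) : SameQfType L M y x :=
  fun φ hφ => (h φ hφ).symm

@[trans]
theorem trans (hxy : SameQfType L M x y) (hyz : SameQfType L M y z) : SameQfType L M x z :=
  fun φ hφ => (hxy φ hφ).trans (hyz φ hφ)

theorem comp {m : ℕ} (h : SameQfType L M x y) (κ : Fin m → Fin n) :
    SameQfType L M (x ∘ κ) (y ∘ κ) := by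
  intro φ hφ
  simpa only [Formula.realize_relabel] using h (φ.relabel κ) (hφ.relabel _)

theorem realize_term_eq (h : SameQfType L M x y) {t s : L.Term (Fin n)}
    (hx : t.realize x = s.realize x) : t.realize y = s.realize y := by
  have h_eq := h (t.equal s) (BoundedFormula.IsAtomic.equal _ _).isQF
  rw [Formula.realize_equal, Formula.realize_equal] at h_eq
  exact h_eq.1 hx

theorem realize_rel_iff (h : SameQfType L M x y) {k : ℕ} (R : L.Relations k)
    (ts : Fin k → L.Term (Fin n)) :
    RelMap R (fun i => (ts i).realize x) ↔ RelMap R (fun i => (ts i).realize y) := by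
  have h_rel := h (R.formula ts) (BoundedFormula.IsAtomic.rel _ _).isQF
  rwa [Formula.realize_rel, Formula.realize_rel] at h_rel

theorem subtype_equiv {S T : L.Substructure M} (e : S ≃[L] T) (x : Fin n → S) :
    SameQfType L M (S.subtype ∘ x) (T.subtype ∘ e ∘ x) := fun ψ hψ => by
  rw [hψ.realize_formula_embedding, hψ.realize_formula_embedding,
    hψ.realize_formula_embedding]

theorem closure_range_subset (h : SameQfType L M x y)
    (hx : (closure L (range x) : Set M) ⊆ range x) :
    (closure L (range y) : Set M) ⊆ range y := by
  intro z hz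
  obtain ⟨t, rfl⟩ := mem_closure_range_iff.1 hz
  obtain ⟨i, hi⟩ := hx (mem_closure_range_iff.2 ⟨t, rfl⟩)
  exact ⟨i, (h.realize_term_eq (t := Term.var i) hi).trans rfl⟩

theorem exists_equiv_closure (h : SameQfType L M x y) :
    ∃ E : closure L (range x) ≃[L] closure L (range y),
      E ∘ closureGenerators L x = closureGenerators L y := by
  choose t ht using fun z : closure L (range x) => mem_closure_range_iff.1 z.2
  let F : closure L (range x) → closure L (range y) :=
    fun z => ⟨(t z).realize y, mem_closure_range_iff.2 ⟨_, rfl⟩⟩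
  have hF : ∀ (z : closure L (range x)) (s : L.Term (Fin n)),
      (z : M) = s.realize x → (F z : M) = s.realize y :=
    fun z s hz => h.realize_term_eq ((ht z).trans hz)
  have hF_bij : F.Bijective := by
    refine ⟨fun z w hzw => Subtype.ext ?_, fun w => ?_⟩
    · rw [← ht z, ← ht w]
      exact h.symm.realize_term_eq (congrArg Subtype.val hzw)
    · obtain ⟨s, hs⟩ := mem_closure_range_iff.1 w.2
      exact ⟨⟨s.realize x, mem_closure_range_iff.2 ⟨s, rfl⟩⟩,
        Subtype.ext ((hF _ s rfl).trans hs)⟩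
  refine ⟨⟨Equiv.ofBijective F hF_bij, fun {k} fn v => Subtype.ext ?_, fun {k} R v => ?_⟩,
    funext fun i => Subtype.ext (hF _ (Term.var i) rfl)⟩
  · exact hF _ (Term.func fn fun i => t (v i))
      (congrArg (funMap fn) (funext fun i => (ht (v i)).symm))
  · have hv : (fun i => (v i : M)) = fun i => (t (v i)).realize x :=
      funext fun i => (ht (v i)).symm
    exact (h.realize_rel_iff R fun i => t (v i)).symm.trans (hv ▸ Iff.rfl)

end SameQfType

end QfType

theorem IsRigidStructure.equiv_eq {L : FirstOrder.Language} {P Q : Type*} [L.Structure P]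
    [L.Structure Q] (hP : IsRigidStructure L P) (e₁ e₂ : P ≃[L] Q) : e₁ = e₂ :=
  Language.Equiv.ext fun p => by
    simpa only [Language.Equiv.comp_apply, Language.Equiv.apply_symm_apply] using
      congrArg e₂ (hP (e₂.symm.comp e₁) p)

section SemiRetraction

variable {L L' : FirstOrder.Language} {M N : Type*} [L.Structure M] [L'.Structure N] {n m : ℕ}

theorem exists_sameQfType_range_eq_of_equiv {a : Fin n → M}
    (ha : (closure L (range a) : Set M) ⊆ range a) {A' : L.Substructure M}
    (χ : A' ≃[L] closure L (range a)) : ∃ x : Fin n → M, SameQfType L M a x ∧ range x = A' := by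
  refine ⟨A'.subtype ∘ χ.symm ∘ closureGenerators L a,
    SameQfType.subtype_equiv χ.symm (closureGenerators L a), subset_antisymm ?_ fun z hz => ?_⟩
  · exact range_subset_iff.2 fun i => (χ.symm _).2
  · obtain ⟨i, hi⟩ := ha (χ ⟨z, hz⟩).2
    refine ⟨i, ?_⟩
    simp only [Function.comp_apply]
    rw [show closureGenerators L a i = χ ⟨z, hz⟩ from Subtype.ext hi,
      Language.Equiv.symm_apply_apply]
    rfl

theorem IsSemiRetraction.sameQfType_comp {g : M → N} {f : N → M}
    (hsr : IsSemiRetraction L L' M N g f) {T T' : L'.Substructure N} (σ : T ≃[L'] T')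
    {x : Fin n → M} {y : Fin n → T} (hy : T.subtype ∘ y = g ∘ x) :
    SameQfType L M x (f ∘ T'.subtype ∘ σ ∘ y) := by
  obtain ⟨-, ⟨-, hf⟩, hfg⟩ := hsr
  exact (hfg n x).trans (hf n _ _ (hy ▸ SameQfType.subtype_equiv σ y))

open scoped Classical in
noncomputable def pullbackColoring {α : Type*} (c : L.Substructure M → α) (f : N → M)
    {A₀ : L'.Substructure N} (a₀ : Fin n → A₀) (S : L'.Substructure N) : α :=
  if h : Nonempty (A₀ ≃[L'] S) then c (closure L (range (f ∘ S.subtype ∘ h.some ∘ a₀))) else c ⊥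

theorem pullbackColoring_eq_of_equiv {α : Type*} (c : L.Substructure M → α) (f : N → M)
    {A₀ S : L'.Substructure N} (hA₀ : IsRigidStructure L' A₀) (a₀ : Fin n → A₀)
    (E : A₀ ≃[L'] S) :
    pullbackColoring c f a₀ S = c (closure L (range (f ∘ S.subtype ∘ E ∘ a₀))) := by
  rw [pullbackColoring, dif_pos ⟨E⟩, hA₀.equiv_eq (Nonempty.some _) E]

theorem IsSemiRetraction.exists_copy_with_pullbackColoring_eq {g : M → N} {f : N → M}
    (hsr : IsSemiRetraction L L' M N g f) {a : Fin n → M} {b : Fin m → M}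
    (ha : (closure L (range a) : Set M) ⊆ range a) (hb : (closure L (range b) : Set M) ⊆ range b)
    (hrig : IsRigidStructure L' (closure L' (range (g ∘ a)))) {B₀' : L'.Substructure N}
    (σ : B₀' ≃[L'] closure L' (range (g ∘ b))) {α : Type*} (c : L.Substructure M → α)
    {A' : L.Substructure M}
    (hA' : A' ≤ closure L (range (f ∘ B₀'.subtype ∘ σ.symm ∘ closureGenerators L' (g ∘ b))))
    (χ : A' ≃[L] closure L (range a)) :
    ∃ S : L'.Substructure N, (S ≤ B₀' ∧ Nonempty (S ≃[L'] closure L' (range (g ∘ a)))) ∧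
      pullbackColoring c f (closureGenerators L' (g ∘ a)) S = c A' := by
  set β := f ∘ B₀'.subtype ∘ σ.symm ∘ closureGenerators L' (g ∘ b)
  have hbβ : SameQfType L M b β := hsr.sameQfType_comp σ.symm rfl
  obtain ⟨⟨-, hg⟩, -⟩ := hsr
  obtain ⟨x, hax, hxA'⟩ := exists_sameQfType_range_eq_of_equiv ha χ
  choose κ hκ using fun i => hbβ.closure_range_subset hb (hA' (hxA' ▸ mem_range_self i))
  have hxκ : β ∘ κ = x := funext hκ
  have habκ : SameQfType L M a (b ∘ κ) := hax.trans (hxκ ▸ (hbβ.comp κ).symm)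
  set u := B₀'.subtype ∘ σ.symm ∘ closureGenerators L' (g ∘ b) ∘ κ
  have hgau : SameQfType L' N (g ∘ a) u :=
    (hg n _ _ habκ).trans
      ((SameQfType.subtype_equiv σ.symm (closureGenerators L' (g ∘ b))).comp κ)
  obtain ⟨E, hE⟩ := hgau.exists_equiv_closure
  refine ⟨closure L' (range u),
    ⟨closure_le.2 (range_subset_iff.2 fun i => (σ.symm _).2), ⟨E.symm⟩⟩, ?_⟩
  rw [pullbackColoring_eq_of_equiv c f hrig _ E, hE]
  change c (closure L (range (β ∘ κ))) = c A'
  rw [hxκ, hxA', closure_eq]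

theorem IsSemiRetraction.arrowSub_closure_range {g : M → N} {f : N → M}
    (hsr : IsSemiRetraction L L' M N g f) {a : Fin n → M} {b : Fin m → M}
    (ha : (closure L (range a) : Set M) ⊆ range a) (hb : (closure L (range b) : Set M) ⊆ range b)
    (hrig : IsRigidStructure L' (closure L' (range (g ∘ a)))) {r d : ℕ}
    (hRP : ArrowSub L' N (closure L' (range (g ∘ a))) (closure L' (range (g ∘ b))) r d) :
    ArrowSub L M (closure L (range a)) (closure L (range b)) r d := by
  intro c
  obtain ⟨B₀', ⟨σ⟩, hB₀'⟩ := hRP (pullbackColoring c f (closureGenerators L' (g ∘ a)))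
  obtain ⟨E, -⟩ :=
    (hsr.sameQfType_comp σ.symm (y := closureGenerators L' (g ∘ b)) rfl).exists_equiv_closure
  refine ⟨_, ⟨E.symm⟩, (ncard_le_ncard ?_ (toFinite _)).trans hB₀'⟩
  rintro _ ⟨A', ⟨hA', ⟨χ⟩⟩, rfl⟩
  exact hsr.exists_copy_with_pullbackColoring_eq ha hb hrig σ c hA' χ

end SemiRetraction

theorem semiRetraction_transfers_RP_of_rigid
    {L L' : FirstOrder.Language} {M N : Type*} [L.Structure M] [L'.Structure N]
    (g : M → N) (f : N → M)
    (hrigid : ∀ S : L'.Substructure N, S.FG → IsRigidStructure L' S)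
    (hsr : IsSemiRetraction L L' M N g f)
    (hRP : ∀ A₀ B₀ : L'.Substructure N, A₀.FG → B₀.FG → ∀ r : ℕ, 2 ≤ r →
      ArrowSub L' N A₀ B₀ r 1) :
    ∀ A B : L.Substructure M, (A : Set M).Finite → (B : Set M).Finite → ∀ r : ℕ, 2 ≤ r →
      ArrowSub L M A B r 1 := by
  intro A B hA hB r hr
  obtain ⟨n, a, -, ha⟩ := hA.fin_param
  obtain ⟨m, b, -, hb⟩ := hB.fin_param
  obtain rfl : closure L (range a) = A := by rw [ha, closure_eq]
  obtain rfl : closure L (range b) = B := by rw [hb, closure_eq]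
  have fg_closure_range {k : ℕ} (x : Fin k → M) : (closure L' (range (g ∘ x))).FG :=
    fg_closure (finite_range _)
  exact hsr.arrowSub_closure_range ha.ge hb.ge (hrigid _ (fg_closure_range a))
    (hRP _ _ (fg_closure_range a) (fg_closure_range b) r hr)
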